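/- For every nonempty pattern V there exists a freely irreducible word ξ ∈ Q±* following V and a letter z ∈ X_i with i = λ_{|V|} (the least index with r_i > 2|V|) such that the dual mapping of the automaton B satisfies D_{i,z}(ξ) = ξ_I ξ̃_II, where ξ = ξ_I ξ_II is the decomposition into first and second parts and ξ̃ swaps a↔b, a⁻¹↔b⁻¹. -/

import Mathlib

/-- The four states `a, b, a⁻¹, b⁻¹` of the automaton `B`. -/
inductive Qpm
  | a | b | ai | bi
  deriving DecidableEq

open Qpm

/-- The `r`-cycle `σ = (1,2,…,r)` on `{1,…,r}`. -/
def csigma (r x : ℕ) : ℕ := if x = r then 1 else x + 1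

/-- The inverse of the `r`-cycle `σ`. -/
def csigmaInv (r x : ℕ) : ℕ := if x = 1 then r else x - 1

/-- The transposition `τ = (1,2)`. -/
def ctau (x : ℕ) : ℕ := if x = 1 then 2 else if x = 2 then 1 else x

/-- The transition function of the automaton `B`: states are fixed on letters
other than 1,2; on letter 1 it swaps `a ↔ b`; on letter 2 it swaps `a⁻¹ ↔ b⁻¹`. -/
def phiB (x : ℕ) (q : Qpm) : Qpm :=
  if x = 1 then
    (match q with
     | a => b
     | b => a
     | q => q)
  else if x = 2 then
    (match q with
     | ai => bi
     | bi => ai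
     | q => q)
  else q

/-- The output function of `B`: `σᵢ` at `a`, `σᵢ⁻¹` at `a⁻¹`, `τ` at `b, b⁻¹`. -/
def psiB (ri : ℕ) (q : Qpm) (x : ℕ) : ℕ :=
  match q with
  | a => csigma ri x
  | ai => csigmaInv ri x
  | _ => ctau x

/-- The dual mapping `D_{i,x}` of the automaton `B` (over `Xᵢ = {1,…,rᵢ}`). -/
def dualB (r : ℕ → ℕ) (i : ℕ) : ℕ → List Qpm → List Qpm
  | _, [] => []
  | x, q :: qs => phiB x q :: dualB r i (psiB (r i) q x) qs

/-- `D_{i,w}`, the composition of dual mappings of `B` along the word `w`. -/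
def dualWB (r : ℕ → ℕ) : ℕ → List ℕ → List Qpm → List Qpm
  | _, [], ξ => ξ
  | i, x :: xs, ξ => dualWB r (i + 1) xs (dualB r i x ξ)

/-- The formal inverse of a state. -/
def qinv : Qpm → Qpm
  | a => ai
  | ai => a
  | b => bi
  | bi => b

/-- The swap `a ↔ b`, `a⁻¹ ↔ b⁻¹` (the tilde operation). -/
def til : Qpm → Qpm
  | a => b
  | b => a
  | ai => bi
  | bi => ai

/-- The pattern symbol of a state: `true` stands for `*`, `false` for `*⁻¹`. -/
def patt : Qpm → Bool
  | a => true
  | b => true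
  | _ => false

/-- A word over `Q±` is freely irreducible if no two consecutive letters are
mutually inverse. -/
def FreelyIrred (ξ : List Qpm) : Prop := List.Chain' (fun p q => q ≠ qinv p) ξ

/-- A word over the changing alphabet `Xᵢ = {1,…,rᵢ}`, starting at index `i`. -/
def ValidB (r : ℕ → ℕ) : ℕ → List ℕ → Prop
  | _, [] => True
  | i, x :: xs => x ∈ Set.Icc 1 (r i) ∧ ValidB r (i + 1) xs

/-! The word realising `V = V_I V_II` with `V_II` starting with `*` is spelled with `a` and `b⁻¹`
only (`a` for `*`), and with `a⁻¹` and `b` only otherwise (`a⁻¹` for `*⁻¹`); such a word can never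
be freely reducible. In `ξ_II` the letters alternate between the two families, so the dual run
started at the letter `1` (resp. `2`) bounces between `1` and `2` and swaps every letter. In `ξ_I`
the run is started high enough that it stays in `{3, …, rᵢ}`, where `B` fixes every state, and the
last letter of `ξ_I` (an `a` read at `rᵢ`, resp. an `a⁻¹` read at `3`) brings it down to the
letter at which `ξ_II` must be entered. The bound `rᵢ > 2|V|` leaves room for this. -/

namespace DualSwitch

def letterOf : Bool → Bool → Qpm
  | true, true => a
  | true, false => bi
  | false, false => ai
  | false, true => b

@[simp]
theorem patt_letterOf (s₀ s : Bool) : patt (letterOf s₀ s) = s := by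
  cases s₀ <;> cases s <;> rfl

theorem map_patt_map_letterOf (s₀ : Bool) (V : List Bool) :
    (V.map (letterOf s₀)).map patt = V := by
  simp [Function.comp_def]

theorem freelyIrred_map_letterOf (s₀ : Bool) (V : List Bool) :
    FreelyIrred (V.map (letterOf s₀)) := by
  show List.IsChain _ _
  rw [List.isChain_map]
  induction V with
  | nil => exact List.isChain_nil
  | cons x V ih =>
    refine List.isChain_cons.mpr ⟨fun y _ => ?_, ih⟩
    cases s₀ <;> cases x <;> cases y <;> decide

def alternating : Bool → ℕ → List Bool
  | _, 0 => []
  | s, n + 1 => s :: alternating (!s) n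

@[simp]
theorem length_alternating (s : Bool) (n : ℕ) : (alternating s n).length = n := by
  induction n generalizing s <;> simp [alternating, *]

theorem alternating_eq_flatten_replicate (s : Bool) :
    ∀ n, alternating s n = (List.replicate (n / 2) [s, !s]).flatten ++ List.replicate (n % 2) s
  | 0 => rfl
  | 1 => rfl
  | n + 2 => by
    rw [alternating, alternating, Bool.not_not, alternating_eq_flatten_replicate s n,
      Nat.add_div_right n two_pos, Nat.add_mod_right, List.replicate_succ, List.flatten_cons]
    rfl

theorem exists_eq_append_alternating :
    ∀ V : List Bool, V ≠ [] → ∃ (P : List Bool) (s : Bool) (n : ℕ),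
      0 < n ∧ V = P ++ alternating s n ∧ (P ≠ [] → P.getLast? = some s)
  | [], hV => absurd rfl hV
  | [v], _ => ⟨[], v, 1, one_pos, rfl, fun h => absurd rfl h⟩
  | v :: w :: V, _ => by
    obtain ⟨P, s, n, hn, hV, hlast⟩ := exists_eq_append_alternating (w :: V) (by simp)
    rcases P with _ | ⟨p, P⟩
    · by_cases hs : s = !v
      · refine ⟨[], v, n + 1, n.succ_pos, ?_, fun h => absurd rfl h⟩
        rw [List.nil_append, alternating, ← hs, hV, List.nil_append]
      · refine ⟨[v], s, n, hn, by rw [hV]; rfl, fun _ => ?_⟩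
        cases s <;> cases v <;> simp_all
    · exact ⟨v :: p :: P, s, n, hn, by rw [hV]; rfl,
        fun _ => by rw [List.getLast?_cons_cons]; exact hlast (by simp)⟩

def dualExit (R x : ℕ) (w : List Qpm) : ℕ := w.foldl (fun y q => psiB R q y) x

@[simp]
theorem dualB_nil (r : ℕ → ℕ) (i x : ℕ) : dualB r i x [] = [] := rfl

@[simp]
theorem dualExit_nil (R x : ℕ) : dualExit R x [] = x := rfl

@[simp]
theorem dualB_cons (r : ℕ → ℕ) (i x : ℕ) (q : Qpm) (w : List Qpm) :
    dualB r i x (q :: w) = phiB x q :: dualB r i (psiB (r i) q x) w := rfl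

@[simp]
theorem dualExit_cons (R x : ℕ) (q : Qpm) (w : List Qpm) :
    dualExit R x (q :: w) = dualExit R (psiB R q x) w := rfl

theorem dualB_append (r : ℕ → ℕ) (i : ℕ) (u w : List Qpm) (x : ℕ) :
    dualB r i x (u ++ w) = dualB r i x u ++ dualB r i (dualExit (r i) x u) w := by
  induction u generalizing x with
  | nil => rfl
  | cons q u ih => simp [ih]

theorem dualExit_append (R x : ℕ) (u w : List Qpm) :
    dualExit R x (u ++ w) = dualExit R (dualExit R x u) w :=
  List.foldl_append

theorem phiB_of_three_le {x : ℕ} (hx : 3 ≤ x) (q : Qpm) : phiB x q = q := by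
  simp [phiB, show x ≠ 1 by omega, show x ≠ 2 by omega]

theorem ctau_of_three_le {x : ℕ} (hx : 3 ≤ x) : ctau x = x := by
  simp [ctau, show x ≠ 1 by omega, show x ≠ 2 by omega]

theorem dualB_map_letterOf_true (r : ℕ → ℕ) (i : ℕ) (P : List Bool) {x : ℕ} (hx : 3 ≤ x)
    (hxr : x + P.count true ≤ r i) :
    dualB r i x (P.map (letterOf true)) = P.map (letterOf true) ∧
      dualExit (r i) x (P.map (letterOf true)) = x + P.count true := by
  induction P generalizing x with
  | nil => exact ⟨rfl, rfl⟩
  | cons s P ih =>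
    cases s
    · have step : psiB (r i) (letterOf true false) x = x := ctau_of_three_le hx
      obtain ⟨hfix, hexit⟩ := ih hx (by simpa using hxr)
      simp [step, hfix, hexit, phiB_of_three_le hx]
    · simp only [List.count_cons_self] at hxr
      have step : psiB (r i) (letterOf true true) x = x + 1 := by
        simp [letterOf, psiB, csigma, show x ≠ r i by omega]
      obtain ⟨hfix, hexit⟩ := ih (x := x + 1) (by omega) (by omega)
      refine ⟨by simp [step, hfix, phiB_of_three_le hx], ?_⟩
      simp only [List.map_cons, dualExit_cons, step, hexit, List.count_cons_self]
      omega

theorem dualB_map_letterOf_false (r : ℕ → ℕ) (i : ℕ) (P : List Bool) {x : ℕ} (hx : 3 ≤ x) :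
    dualB r i (x + P.count false) (P.map (letterOf false)) = P.map (letterOf false) ∧
      dualExit (r i) (x + P.count false) (P.map (letterOf false)) = x := by
  induction P with
  | nil => exact ⟨rfl, rfl⟩
  | cons s P ih =>
    cases s
    · have step : psiB (r i) (letterOf false false) (x + P.count false + 1) = x + P.count false := by
        rw [letterOf, psiB, csigmaInv, if_neg (by omega), Nat.add_sub_cancel]
      simp [← add_assoc, step, ih, phiB_of_three_le (show 3 ≤ x + P.count false + 1 by omega)]
    · have step : psiB (r i) (letterOf false true) (x + P.count false) = x + P.count false :=
        ctau_of_three_le (by omega)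
      simp [step, ih, phiB_of_three_le (show 3 ≤ x + P.count false by omega)]

def switchEntry (s : Bool) : ℕ := bif s then 1 else 2

theorem dualB_map_letterOf_alternating (r : ℕ → ℕ) (i : ℕ) (hr : 3 ≤ r i) (s₀ s : Bool) (n : ℕ) :
    dualB r i (switchEntry s) ((alternating s n).map (letterOf s₀)) =
      ((alternating s n).map (letterOf s₀)).map til := by
  induction n generalizing s with
  | zero => rfl
  | succ n ih =>
    have step : psiB (r i) (letterOf s₀ s) (switchEntry s) = switchEntry (!s) := by
      cases s₀ <;> cases s <;>
        simp [letterOf, psiB, switchEntry, csigma, csigmaInv, ctau, show 1 ≠ r i by omega]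
    have swap : phiB (switchEntry s) (letterOf s₀ s) = til (letterOf s₀ s) := by
      cases s₀ <;> cases s <;> rfl
    simp only [alternating, List.map_cons, dualB_cons, step, swap, ih]

theorem exists_dualB_fix_of_getLast (r : ℕ → ℕ) (i : ℕ) (P : List Bool) (s : Bool)
    (hP : P ≠ [] → P.getLast? = some s) (hlen : P.length + 2 ≤ r i) :
    ∃ z ∈ Set.Icc 1 (r i), dualB r i z (P.map (letterOf s)) = P.map (letterOf s) ∧
      dualExit (r i) z (P.map (letterOf s)) = switchEntry s := by
  rcases P.eq_nil_or_concat' with rfl | ⟨P, t, rfl⟩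
  · exact ⟨switchEntry s, by cases s <;> simp [switchEntry] <;> omega, rfl, rfl⟩
  obtain rfl : s = t := by simpa using (hP (by simp)).symm
  simp only [List.length_append, List.length_singleton] at hlen
  simp only [List.map_append, List.map_cons, List.map_nil, dualB_append]
  cases s
  · obtain ⟨hfix, hexit⟩ := dualB_map_letterOf_false r i P (le_refl 3)
    have hcount := P.count_le_length (a := false)
    refine ⟨3 + P.count false, ⟨by omega, by omega⟩, ?_, ?_⟩
    · rw [hfix, hexit]; rfl
    · rw [dualExit_append, hexit]; rfl
  · have hcount := P.count_le_length (a := true)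
    obtain ⟨hfix, hexit⟩ := dualB_map_letterOf_true r i P (x := r i - P.count true)
      (by omega) (by omega)
    rw [Nat.sub_add_cancel (by omega)] at hexit
    refine ⟨r i - P.count true, ⟨by omega, by omega⟩, ?_, ?_⟩
    · rw [hfix, hexit]; simp [phiB_of_three_le (show 3 ≤ r i by omega)]
    · rw [dualExit_append, hexit]; simp [letterOf, psiB, csigma, switchEntry]

end DualSwitch

open DualSwitch

theorem exists_word_switched_by_one_dual_letter_general
    (r : ℕ → ℕ)
    (L : ℕ → ℕ) (hL : ∀ n, 2 * n < r (L n) ∧ ∀ j < L n, r j ≤ 2 * n) :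
    ∀ V : List Bool, V ≠ [] →
      ∃ (ξI ξII : List Qpm) (z : ℕ),
        (ξI ++ ξII).map patt = V ∧
        FreelyIrred (ξI ++ ξII) ∧
        (ξI ≠ [] → (ξI.map patt).getLast? = (ξII.map patt).head?) ∧
        (∃ (s : Bool) (l rr : ℕ), rr ≤ 1 ∧ (l, rr) ≠ (0, 0) ∧
          ξII.map patt = (List.replicate l [s, !s]).flatten ++ List.replicate rr s) ∧
        z ∈ Set.Icc 1 (r (L V.length)) ∧
        dualB r (L V.length) z (ξI ++ ξII) = ξI ++ ξII.map til := by
  intro V hV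
  obtain ⟨P, s, n, hn, rfl, hlast⟩ := exists_eq_append_alternating V hV
  have hr : 2 * (P.length + n) < r (L (P ++ alternating s n).length) := by
    simpa using (hL _).1
  obtain ⟨z, hz, hfix, hexit⟩ :=
    exists_dualB_fix_of_getLast r (L (P ++ alternating s n).length) P s hlast (by omega)
  refine ⟨P.map (letterOf s), (alternating s n).map (letterOf s), z, ?_, ?_, ?_,
    ⟨s, n / 2, n % 2, by omega, by simp only [ne_eq, Prod.mk.injEq]; omega, ?_⟩, hz, ?_⟩
  · rw [← List.map_append, map_patt_map_letterOf]
  · rw [← List.map_append]; exact freelyIrred_map_letterOf s _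
  · intro hP
    rw [map_patt_map_letterOf, map_patt_map_letterOf, hlast (by simpa using hP)]
    obtain ⟨m, rfl⟩ := Nat.exists_eq_succ_of_ne_zero hn.ne'
    rfl
  · rw [map_patt_map_letterOf, alternating_eq_flatten_replicate]
  · rw [dualB_append, hfix, hexit, dualB_map_letterOf_alternating r _ (by omega)]

/-- for every nonempty pattern `V` there is a freely irreducible
word `ξ = ξ_I ξ_II` following `V` and a letter `z ∈ X_i` with `i = λ_{|V|}`
such that `D_{i,z}(ξ) = ξ_I ξ̃_II`. -/
theorem exists_word_switched_by_one_dual_letter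
    (r : ℕ → ℕ) (hmono : Monotone r) (hge : ∀ i, 2 ≤ r i)
    (hunb : ∀ N, ∃ i, N < r i)
    (L : ℕ → ℕ) (hL : ∀ n, 2 * n < r (L n) ∧ ∀ j < L n, r j ≤ 2 * n) :
    ∀ V : List Bool, V ≠ [] →
      ∃ (ξI ξII : List Qpm) (z : ℕ),
        (ξI ++ ξII).map patt = V ∧
        FreelyIrred (ξI ++ ξII) ∧
        (ξI ≠ [] → (ξI.map patt).getLast? = (ξII.map patt).head?) ∧
        (∃ (s : Bool) (l rr : ℕ), rr ≤ 1 ∧ (l, rr) ≠ (0, 0) ∧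
          ξII.map patt = (List.replicate l [s, !s]).flatten ++ List.replicate rr s) ∧
        z ∈ Set.Icc 1 (r (L V.length)) ∧
        dualB r (L V.length) z (ξI ++ ξII) = ξI ++ ξII.map til :=
  exists_word_switched_by_one_dual_letter_general r L hL
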